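/- Let κ>0 and let φ:[0,1]^d→ℝ be continuous. Then the convexity penalty P^{(κ)}(φ) equals 0 if and only if φ is κ-strongly convex on [0,1]^d. -/

import Mathlib

open MeasureTheory ProbabilityTheory
open scoped ENNReal Classical

noncomputable section

abbrev E (d : ℕ) := EuclideanSpace ℝ (Fin d)

def cube (d : ℕ) : Set (E d) := {x | ∀ i, x i ∈ Set.Icc (0:ℝ) 1}

def lam (d : ℕ) : Measure (E d) := volume.restrict (cube d)

def KL {d : ℕ} (ν μ : Measure (E d)) : ℝ := ∫ x, Real.log ((ν.rnDeriv μ) x).toReal ∂ν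

def JS {d : ℕ} (μ ν : Measure (E d)) : ℝ :=
  (1/2) * (KL ν ((2:ℝ≥0∞)⁻¹ • (μ + ν)) + KL μ ((2:ℝ≥0∞)⁻¹ • (μ + ν)))

def ganLoss {d : ℕ} (μstar : Measure (E d)) (G : E d → E d) (D : E d → ℝ) : ℝ :=
  (1/2) * ((∫ y, Real.log (D y) ∂μstar) + ∫ z, Real.log (1 - D (G z)) ∂(lam d))

def hessW {d : ℕ} (φ : E d → ℝ) (x : E d) : E d →L[ℝ] E d →L[ℝ] ℝ :=
  fderivWithin ℝ (fun y => fderivWithin ℝ φ (cube d) y) (cube d) x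

def gradW {d : ℕ} (φ : E d → ℝ) (x : E d) : E d :=
  (InnerProductSpace.toDual ℝ (E d)).symm (fderivWithin ℝ φ (cube d) x)

def hessMat {d : ℕ} (φ : E d → ℝ) (x : E d) : Matrix (Fin d) (Fin d) ℝ :=
  fun i j => hessW φ x (EuclideanSpace.single i 1) (EuclideanSpace.single j 1)

def C2norm {d : ℕ} (φ : E d → ℝ) : ℝ :=
  ⨆ k : Fin 3, ⨆ x : cube d, ‖iteratedFDerivWithin ℝ (k : ℕ) φ (cube d) (x : E d)‖

def C21norm {d : ℕ} (φ : E d → ℝ) : ℝ :=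
  C2norm φ + ⨆ p : cube d × cube d,
    ‖iteratedFDerivWithin ℝ 2 φ (cube d) (p.1 : E d) - iteratedFDerivWithin ℝ 2 φ (cube d) (p.2 : E d)‖
      / ‖(p.1 : E d) - (p.2 : E d)‖

def Pen {d : ℕ} (κ : ℝ) (φ : E d → ℝ) : ℝ :=
  ∫ u, max 0 (φ ((2:ℝ)⁻¹ • (u.1 + u.2)) - (φ u.1 + φ u.2)/2 + (κ/8) * ‖u.1 - u.2‖^2)
    ∂((volume.restrict (cube d)).prod (volume.restrict (cube d)))

/-!
The integrand of `Pen κ φ` is the positive part of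
`F u v = φ (midpoint u v) - (φ u + φ v) / 2 + κ / 8 * ‖u - v‖ ^ 2`, and by the parallelogram law
`F u v` is exactly the midpoint-convexity defect of `ψ = φ - κ / 2 * ‖·‖ ^ 2`. The positive part of
`F` is continuous and nonnegative on `cube d ×ˢ cube d`, a compact set contained in the closure of
its interior, so its integral vanishes iff `F ≤ 0` there, i.e. iff `ψ` is midpoint convex on the
cube. For continuous `ψ` midpoint convexity is convexity: along a segment, the parameters at which
`ψ` lies below its chord form a closed set containing the endpoints and closed under midpoints.
-/

open Set

theorem cube_eq_preimage_pi (d : ℕ) :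
    cube d = EuclideanSpace.equiv (Fin d) ℝ ⁻¹' univ.pi fun _ => Icc 0 1 := by
  ext x
  simp only [cube, mem_preimage, mem_univ_pi]
  rfl

theorem convex_cube (d : ℕ) : Convex ℝ (cube d) := by
  rw [cube_eq_preimage_pi]
  exact (convex_pi fun _ _ => convex_Icc 0 1).linear_preimage
    (EuclideanSpace.equiv (Fin d) ℝ).toLinearMap

theorem isCompact_cube (d : ℕ) : IsCompact (cube d) := by
  rw [cube_eq_preimage_pi]
  exact (EuclideanSpace.equiv (Fin d) ℝ).toHomeomorph.isCompact_preimage.2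
    (isCompact_univ_pi fun _ => isCompact_Icc)

theorem closure_interior_cube (d : ℕ) : closure (interior (cube d)) = cube d := by
  let e := (EuclideanSpace.equiv (Fin d) ℝ).toHomeomorph
  rw [show cube d = e ⁻¹' univ.pi fun _ => Icc 0 1 from cube_eq_preimage_pi d,
    ← e.preimage_interior, ← e.preimage_closure, interior_pi_set finite_univ, closure_pi_set]
  simp [closure_Ioo zero_ne_one]

theorem cube_prod_subset_closure_interior (d : ℕ) :
    cube d ×ˢ cube d ⊆ closure (interior (cube d ×ˢ cube d)) := by
  rw [interior_prod_eq, closure_prod_eq, closure_interior_cube]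

theorem setIntegral_eq_zero_iff_eqOn_of_nonneg {X : Type*} [TopologicalSpace X] [T2Space X]
    [MeasurableSpace X] [OpensMeasurableSpace X] {μ : Measure X} [μ.IsOpenPosMeasure]
    [IsFiniteMeasureOnCompacts μ] {K : Set X} (hK : IsCompact K) (hKi : K ⊆ closure (interior K))
    {f : X → ℝ} (hf : ContinuousOn f K) (hf0 : ∀ x ∈ K, 0 ≤ f x) :
    ∫ x in K, f x ∂μ = 0 ↔ EqOn f 0 K := by
  rw [integral_eq_zero_iff_of_nonneg_ae (ae_restrict_of_forall_mem hK.measurableSet hf0)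
    (hf.integrableOn_compact hK)]
  exact ⟨fun h => Measure.eqOn_of_ae_eq h hf continuousOn_const hKi,
    fun h => (ae_restrict_mem hK.measurableSet).mono h⟩

theorem Icc_subset_of_isClosed_of_midpoint_mem {S : Set ℝ} (hS : IsClosed S) {a b : ℝ}
    (ha : a ∈ S) (hb : b ∈ S)
    (hmid : ∀ p ∈ S ∩ Icc a b, ∀ q ∈ S ∩ Icc a b, (p + q) / 2 ∈ S) : Icc a b ⊆ S := by
  intro t ⟨hat, htb⟩
  by_contra htS
  -- the points of `S` closest to `t` from either side have their midpoint in `S`, too close to `t`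
  have hA : IsCompact (S ∩ Icc a t) := isCompact_Icc.inter_left hS
  have hB : IsCompact (S ∩ Icc t b) := isCompact_Icc.inter_left hS
  obtain ⟨⟨hpS, hap, hpt⟩, hp_max⟩ := hA.isGreatest_sSup ⟨a, ha, le_rfl, hat⟩
  obtain ⟨⟨hqS, htq, hqb⟩, hq_min⟩ := hB.isLeast_sInf ⟨b, hb, htb, le_rfl⟩
  set p := sSup (S ∩ Icc a t)
  set q := sInf (S ∩ Icc t b)
  have hpt : p < t := hpt.lt_of_ne fun h => htS (h ▸ hpS)
  have htq : t < q := htq.lt_of_ne fun h => htS (h ▸ hqS)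
  have hm := hmid p ⟨hpS, hap, hpt.le.trans (htq.le.trans hqb)⟩ q
    ⟨hqS, hap.trans (hpt.le.trans htq.le), hqb⟩
  rcases le_or_gt ((p + q) / 2) t with hmt | htm
  · linarith [hp_max ⟨hm, by linarith, hmt⟩]
  · linarith [hq_min ⟨hm, htm.le, by linarith⟩]

theorem convexOn_of_continuousOn_of_midpoint {F : Type*} [NormedAddCommGroup F] [NormedSpace ℝ F]
    {s : Set F} {f : F → ℝ} (hs : Convex ℝ s) (hf : ContinuousOn f s)
    (hmid : ∀ x ∈ s, ∀ y ∈ s, f (midpoint ℝ x y) ≤ (f x + f y) / 2) :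
    ConvexOn ℝ s f := by
  refine ⟨hs, fun x hx y hy a b _ hb hab => ?_⟩
  let γ : ℝ → F := AffineMap.lineMap x y
  have hγ : MapsTo γ (Icc 0 1) s := fun t ht => hs.lineMap_mem hx hy ht
  let g : ℝ → ℝ := fun t => f (γ t) - AffineMap.lineMap (f x) (f y) t
  have hg : ContinuousOn g (Icc 0 1) :=
    (hf.comp AffineMap.lineMap_continuous.continuousOn hγ).sub
      AffineMap.lineMap_continuous.continuousOn
  have hsub : Icc (0 : ℝ) 1 ⊆ Icc 0 1 ∩ g ⁻¹' Iic 0 := by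
    refine Icc_subset_of_isClosed_of_midpoint_mem
      (hg.preimage_isClosed_of_isClosed isClosed_Icc isClosed_Iic)
      ⟨left_mem_Icc.2 zero_le_one, by simp [g, γ]⟩ ⟨right_mem_Icc.2 zero_le_one, by simp [g, γ]⟩
      fun p ⟨⟨hp, hgp⟩, _⟩ q ⟨⟨hq, hgq⟩, _⟩ =>
        ⟨⟨by linarith [hp.1, hq.1], by linarith [hp.2, hq.2]⟩, ?_⟩
    have hγm : γ ((p + q) / 2) = midpoint ℝ (γ p) (γ q) := by
      simp only [γ]
      rw [← AffineMap.map_midpoint, midpoint_eq_smul_add, invOf_eq_inv, smul_eq_mul]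
      ring_nf
    have := hmid _ (hγ hp) _ (hγ hq)
    simp only [mem_preimage, mem_Iic, g, AffineMap.lineMap_apply_ring'] at hgp hgq ⊢
    rw [hγm]
    linarith
  have := (hsub ⟨hb, by linarith⟩).2
  simp only [mem_preimage, mem_Iic, g, γ, AffineMap.lineMap_apply_module] at this
  rw [← hab, add_sub_cancel_right] at this
  simp only [smul_eq_mul] at this ⊢
  linarith

theorem convexOn_iff_midpoint_of_continuousOn {F : Type*} [NormedAddCommGroup F] [NormedSpace ℝ F]
    {s : Set F} {f : F → ℝ} (hs : Convex ℝ s) (hf : ContinuousOn f s) :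
    ConvexOn ℝ s f ↔ ∀ x ∈ s, ∀ y ∈ s, f (midpoint ℝ x y) ≤ (f x + f y) / 2 := by
  refine ⟨fun h x hx y hy => ?_, convexOn_of_continuousOn_of_midpoint hs hf⟩
  have := h.2 hx hy (by norm_num : (0 : ℝ) ≤ 2⁻¹) (by norm_num : (0 : ℝ) ≤ 2⁻¹) (by norm_num)
  rw [midpoint_eq_smul_add, invOf_eq_inv, smul_add]
  simp only [smul_eq_mul] at this
  linarith

theorem midpoint_le_iff_sub_half_sq_norm {F : Type*} [NormedAddCommGroup F] [InnerProductSpace ℝ F]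
    (κ : ℝ) (φ : F → ℝ) (u v : F) :
    φ (midpoint ℝ u v) - κ / 2 * ‖midpoint ℝ u v‖ ^ 2
        ≤ ((φ u - κ / 2 * ‖u‖ ^ 2) + (φ v - κ / 2 * ‖v‖ ^ 2)) / 2 ↔
      φ ((2 : ℝ)⁻¹ • (u + v)) - (φ u + φ v) / 2 + κ / 8 * ‖u - v‖ ^ 2 ≤ 0 := by
  rw [← sub_nonpos, midpoint_eq_smul_add, invOf_eq_inv, norm_smul,
    Real.norm_of_nonneg (by norm_num : (0 : ℝ) ≤ 2⁻¹)]
  convert Iff.rfl using 2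
  linear_combination (κ / 8) * parallelogram_law_with_norm ℝ u v

theorem stmt17_general {d : ℕ} (κ : ℝ) (φ : E d → ℝ)
    (hφ : ContinuousOn φ (cube d)) :
    Pen κ φ = 0 ↔ ConvexOn ℝ (cube d) (fun x => φ x - (κ/2) * ‖x‖^2) := by
  set F : E d × E d → ℝ := fun u =>
    φ ((2 : ℝ)⁻¹ • (u.1 + u.2)) - (φ u.1 + φ u.2) / 2 + κ / 8 * ‖u.1 - u.2‖ ^ 2
  have hPen : Pen κ φ = ∫ u in cube d ×ˢ cube d, max 0 (F u) := by
    rw [Pen, Measure.prod_restrict, ← Measure.volume_eq_prod]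
  have hmaps : MapsTo (fun u : E d × E d => (2 : ℝ)⁻¹ • (u.1 + u.2)) (cube d ×ˢ cube d) (cube d) :=
    fun u hu => by
      simpa [smul_add] using (convex_cube d) hu.1 hu.2 (by norm_num : (0 : ℝ) ≤ 2⁻¹)
        (by norm_num : (0 : ℝ) ≤ 2⁻¹) (by norm_num)
  have hF : ContinuousOn F (cube d ×ˢ cube d) :=
    ((hφ.comp (by fun_prop) hmaps).sub (((hφ.comp continuousOn_fst fun _ hu => hu.1).add
      (hφ.comp continuousOn_snd fun _ hu => hu.2)).div_const 2)).add (by fun_prop)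
  have hψ : ContinuousOn (fun x => φ x - κ / 2 * ‖x‖ ^ 2) (cube d) := hφ.sub (by fun_prop)
  rw [hPen, setIntegral_eq_zero_iff_eqOn_of_nonneg ((isCompact_cube d).prod (isCompact_cube d))
    (cube_prod_subset_closure_interior d) (continuousOn_const.sup hF) fun _ _ => le_max_left _ _,
    convexOn_iff_midpoint_of_continuousOn (convex_cube d) hψ]
  simp only [EqOn, Prod.forall, mem_prod, Pi.zero_apply, max_eq_left_iff,
    midpoint_le_iff_sub_half_sq_norm, F]
  exact ⟨fun h x hx y hy => h x y ⟨hx, hy⟩, fun h x y hxy => h x hxy.1 y hxy.2⟩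

/-- for a continuous `φ` on the cube and `κ > 0`, the convexity penalty
`P^{(κ)}(φ)` vanishes if and only if `φ` is `κ`-strongly convex on the cube. -/
theorem stmt17 {d : ℕ} (κ : ℝ) (hκ : 0 < κ) (φ : E d → ℝ)
    (hφ : ContinuousOn φ (cube d)) :
    Pen κ φ = 0 ↔ ConvexOn ℝ (cube d) (fun x => φ x - (κ/2) * ‖x‖^2) :=
  stmt17_general κ φ hφ

end
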